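/- arXiv:1708.04180 — 4 statements merged into one kernel-verified Lean document; each statement's English description precedes it below -/
import Mathlib

section
/- Let X be a Banach space and U ⊆ X be closed and convex. Then the topological interior of U equals its algebraic interior (core): U° = {x ∈ U : for all h ∈ X there exists δ > 0 such that x + t·h ∈ U for all t ∈ [0, δ]}. -/
/-!
A point of the topological interior is clearly in the core. Conversely, translate a core point
`x` to the origin: the dilates `(n + 1) • (U - x)` are closed and cover `X`, so by Baire one of
them, hence `U` itself, has an interior point `w`. Going from `w` through `x` a little beyond `x`
stays in `U`, so `x` lies on an open segment from an interior point to a point of `U`, and such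
points are interior by convexity.
-/

open Set Topology Pointwise

section AlgebraicInterior

variable {E : Type*} [AddCommGroup E] [Module ℝ E]

def algebraicInterior (s : Set E) : Set E :=
  {x ∈ s | ∀ h : E, ∃ δ > (0 : ℝ), ∀ t ∈ Icc (0 : ℝ) δ, x + t • h ∈ s}

theorem iUnion_nat_succ_smul_eq_univ_of_zero_mem_algebraicInterior
    {s : Set E} (h0 : (0 : E) ∈ algebraicInterior s) : ⋃ n : ℕ, ((n : ℝ) + 1) • s = univ := by
  refine eq_univ_of_forall fun y ↦ mem_iUnion.2 ?_
  obtain ⟨δ, hδ, hseg⟩ := h0.2 y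
  obtain ⟨n, hn⟩ := exists_nat_gt δ⁻¹
  have hn₀ : (0 : ℝ) < n + 1 := n.cast_add_one_pos
  have hle : ((n : ℝ) + 1)⁻¹ ≤ δ := inv_le_of_inv_le₀ hδ (by linarith)
  refine ⟨n, ((n : ℝ) + 1)⁻¹ • y, by simpa using hseg _ ⟨by positivity, hle⟩, ?_⟩
  simp [smul_smul, hn₀.ne']

variable [TopologicalSpace E]

theorem interior_subset_algebraicInterior [ContinuousAdd E] [ContinuousSMul ℝ E] (s : Set E) :
    interior s ⊆ algebraicInterior s := by
  intro x hx
  refine ⟨interior_subset hx, fun h ↦ ?_⟩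
  have hnhds : (fun t : ℝ ↦ x + t • h) ⁻¹' s ∈ 𝓝 0 :=
    (Continuous.tendsto (by fun_prop) 0).eventually
      (by simpa using mem_interior_iff_mem_nhds.1 hx)
  obtain ⟨ε, hε, hball⟩ := Metric.mem_nhds_iff.1 hnhds
  refine ⟨ε / 2, half_pos hε, fun t ht ↦ hball ?_⟩
  rw [Metric.mem_ball, Real.dist_0_eq_abs, abs_of_nonneg ht.1]
  linarith [ht.2]

section TopologicalAddGroup

variable [IsTopologicalAddGroup E] [ContinuousConstSMul ℝ E] {s : Set E} {x : E}

theorem nonempty_interior_of_isClosed_of_mem_algebraicInterior [BaireSpace E]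
    (hs : IsClosed s) (hx : x ∈ algebraicInterior s) : (interior s).Nonempty := by
  have h0 : (0 : E) ∈ algebraicInterior ((x + ·) ⁻¹' s) := by
    simpa [algebraicInterior] using hx
  obtain ⟨n, y, hy⟩ := nonempty_interior_of_iUnion_of_closed
    (fun n : ℕ ↦ (hs.preimage (continuous_const_add x)).smul_of_ne_zero
      (n.cast_add_one_ne_zero : (n : ℝ) + 1 ≠ 0))
    (iUnion_nat_succ_smul_eq_univ_of_zero_mem_algebraicInterior h0)
  rw [interior_smul₀ n.cast_add_one_ne_zero] at hy
  obtain ⟨w, hw, -⟩ := hy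
  exact ⟨x + w, ((Homeomorph.addLeft x).preimage_interior s).ge hw⟩

theorem Convex.mem_interior_of_mem_algebraicInterior (hc : Convex ℝ s)
    (hne : (interior s).Nonempty) (hx : x ∈ algebraicInterior s) : x ∈ interior s := by
  obtain ⟨w, hw⟩ := hne
  obtain ⟨δ, hδ, hseg⟩ := hx.2 (x - w)
  have hy : x + δ • (x - w) ∈ s := hseg δ ⟨hδ.le, le_rfl⟩
  have hcombo : (δ / (1 + δ)) • w + (1 / (1 + δ)) • (x + δ • (x - w)) = x := by
    have : 1 + δ ≠ 0 := by positivity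
    match_scalars <;> field_simp
    ring
  rw [← hcombo]
  exact hc.combo_interior_self_mem_interior hw hy (by positivity) (by positivity)
    (by field_simp; ring)

end TopologicalAddGroup

theorem IsClosed.algebraicInterior_eq_interior [IsTopologicalAddGroup E] [ContinuousSMul ℝ E]
    [BaireSpace E] {s : Set E} (hs : IsClosed s) (hc : Convex ℝ s) :
    algebraicInterior s = interior s :=
  Subset.antisymm
    (fun _ hx ↦ hc.mem_interior_of_mem_algebraicInterior
      (nonempty_interior_of_isClosed_of_mem_algebraicInterior hs hx) hx)
    (interior_subset_algebraicInterior s)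

end AlgebraicInterior

/-- Core-int lemma: in a Banach space, the topological interior of a closed convex set
equals its algebraic interior (core). -/
theorem interior_eq_core {X : Type*} [NormedAddCommGroup X] [NormedSpace ℝ X]
    [CompleteSpace X] (U : Set X) (hclosed : IsClosed U) (hconv : Convex ℝ U) :
    interior U =
      {x ∈ U | ∀ h : X, ∃ δ > (0:ℝ), ∀ t ∈ Set.Icc (0:ℝ) δ, x + t • h ∈ U} :=
  (hclosed.algebraicInterior_eq_interior hconv).symm
end

section
/- Let F: X → ℝ ∪ {∞} be proper. Then the biconjugate satisfies F** ≤ F pointwise, and F** = F if and only if F is convex and lower semicontinuous (Fenchel–Moreau theorem). -/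
open Topology

/-- Convexity for extended-real-valued functionals. -/
def ConvexE {X : Type*} [AddCommMonoid X] [Module ℝ X] (F : X → EReal) : Prop :=
  ∀ x y : X, ∀ a b : ℝ, 0 ≤ a → 0 ≤ b → a + b = 1 →
    F (a • x + b • y) ≤ (a : EReal) * F x + (b : EReal) * F y

/-- The Fenchel conjugate of `F : X → ℝ ∪ {∞}`. -/
noncomputable def EConj {X : Type*} [NormedAddCommGroup X] [NormedSpace ℝ X]
    (F : X → EReal) (f : X →L[ℝ] ℝ) : EReal :=
  ⨆ x : X, ((f x : ℝ) : EReal) - F x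

/-- The Fenchel biconjugate of `F : X → ℝ ∪ {∞}`. -/
noncomputable def EBiconj {X : Type*} [NormedAddCommGroup X] [NormedSpace ℝ X]
    (F : X → EReal) (x : X) : EReal :=
  ⨆ f : X →L[ℝ] ℝ, ((f x : ℝ) : EReal) - EConj F f

section FenchelMoreauAux

variable {X : Type*} [NormedAddCommGroup X] [NormedSpace ℝ X]

lemma biconj_le_aux (F : X → EReal) (hbot : ∀ x, F x ≠ ⊥) (x : X) : EBiconj F x ≤ F x := by
  refine iSup_le fun f => ?_
  cases hx : F x using EReal.rec with
  | bot => exact absurd hx (hbot x)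
  | top => exact le_top
  | coe t =>
    have h1 : ((f x - t : ℝ) : EReal) ≤ EConj F f := by
      have := le_iSup (fun z : X => ((f z : ℝ) : EReal) - F z) x
      rwa [hx, ← EReal.coe_sub] at this
    calc ((f x : ℝ) : EReal) - EConj F f
        ≤ ((f x : ℝ) : EReal) - ((f x - t : ℝ) : EReal) := EReal.sub_le_sub le_rfl h1
      _ = (t : EReal) := by rw [← EReal.coe_sub, sub_sub_cancel]

lemma conj_le_of_minorant (F : X → EReal) (φ : X →L[ℝ] ℝ) (c : ℝ)
    (h : ∀ x, ((φ x - c : ℝ) : EReal) ≤ F x) : EConj F φ ≤ (c : EReal) := by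
  refine iSup_le fun x => ?_
  cases hx : F x using EReal.rec with
  | bot =>
    have h' := h x
    rw [hx, le_bot_iff] at h'
    exact absurd h' (EReal.coe_ne_bot _)
  | coe t =>
    have h' := h x
    rw [hx, EReal.coe_le_coe_iff] at h'
    rw [← EReal.coe_sub, EReal.coe_le_coe_iff]
    linarith
  | top => rw [EReal.sub_top]; exact bot_le

lemma minorant_le_biconj (F : X → EReal) (φ : X →L[ℝ] ℝ) (c : ℝ)
    (h : ∀ x, ((φ x - c : ℝ) : EReal) ≤ F x) (x : X) :
    ((φ x - c : ℝ) : EReal) ≤ EBiconj F x := by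
  have h1 : ((φ x : ℝ) : EReal) - EConj F φ ≤ EBiconj F x :=
    le_iSup (fun f : X →L[ℝ] ℝ => ((f x : ℝ) : EReal) - EConj F f) φ
  refine le_trans ?_ h1
  rw [EReal.coe_sub]
  exact EReal.sub_le_sub le_rfl (conj_le_of_minorant F φ c h)

lemma biconj_lsc (F : X → EReal) : LowerSemicontinuous (EBiconj F) := by
  have h : ∀ f : X →L[ℝ] ℝ, LowerSemicontinuous fun x => ((f x : ℝ) : EReal) - EConj F f := by
    intro f
    cases hc : EConj F f using EReal.rec with
    | bot =>
      have he : (fun x => ((f x : ℝ) : EReal) - ⊥) = fun _ => (⊤ : EReal) := by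
        funext x; exact EReal.coe_sub_bot _
      rw [he]; exact lowerSemicontinuous_const
    | coe c =>
      have he : (fun x => ((f x : ℝ) : EReal) - (c : EReal))
          = fun x => ((f x - c : ℝ) : EReal) := by
        funext x; rw [EReal.coe_sub]
      rw [he]
      exact (continuous_coe_real_ereal.comp
        ((f.continuous).sub continuous_const)).lowerSemicontinuous
    | top =>
      have he : (fun x => ((f x : ℝ) : EReal) - ⊤) = fun _ => (⊥ : EReal) := by
        funext x; exact EReal.sub_top _
      rw [he]; exact lowerSemicontinuous_const
  exact lowerSemicontinuous_iSup h

lemma biconj_convex (F : X → EReal) : ConvexE (EBiconj F) := by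
  intro x y a b ha hb hab
  rcases eq_or_lt_of_le ha with rfl0 | ha'
  · have hb1 : b = 1 := by linarith
    subst hb1
    rw [← rfl0]
    simp only [zero_smul, one_smul, zero_add, EReal.coe_zero, EReal.zero_mul, EReal.coe_one,
      one_mul]
    exact le_rfl
  rcases eq_or_lt_of_le hb with rfl0 | hb'
  · have ha1 : a = 1 := by linarith
    subst ha1
    rw [← rfl0]
    simp only [one_smul, zero_smul, add_zero, EReal.coe_zero, EReal.zero_mul, EReal.coe_one,
      one_mul]
    exact le_rfl
  refine iSup_le fun f => ?_
  have key : ((f (a • x + b • y) : ℝ) : EReal) - EConj F f ≤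
      (a : EReal) * (((f x : ℝ) : EReal) - EConj F f) +
      (b : EReal) * (((f y : ℝ) : EReal) - EConj F f) := by
    cases hc : EConj F f using EReal.rec with
    | bot =>
      have h1 : (a : EReal) * (((f x : ℝ) : EReal) - ⊥) = ⊤ := by
        rw [EReal.coe_sub_bot, EReal.mul_top_of_pos (by exact_mod_cast ha')]
      have h2 : (b : EReal) * (((f y : ℝ) : EReal) - ⊥) = ⊤ := by
        rw [EReal.coe_sub_bot, EReal.mul_top_of_pos (by exact_mod_cast hb')]
      rw [h1, h2, EReal.top_add_top]
      exact le_top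
    | coe c =>
      rw [← EReal.coe_sub, ← EReal.coe_sub, ← EReal.coe_sub, ← EReal.coe_mul, ← EReal.coe_mul,
        ← EReal.coe_add, EReal.coe_le_coe_iff]
      have hmap : f (a • x + b • y) = a * f x + b * f y := by
        rw [map_add, map_smul, map_smul, smul_eq_mul, smul_eq_mul]
      rw [hmap]
      exact le_of_eq (by linear_combination c * hab)
    | top =>
      rw [EReal.sub_top]
      exact bot_le
  refine key.trans (add_le_add ?_ ?_)
  · exact mul_le_mul_of_nonneg_left
      (le_iSup (fun g : X →L[ℝ] ℝ => ((g x : ℝ) : EReal) - EConj F g) f)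
      (by exact_mod_cast ha)
  · exact mul_le_mul_of_nonneg_left
      (le_iSup (fun g : X →L[ℝ] ℝ => ((g y : ℝ) : EReal) - EConj F g) f)
      (by exact_mod_cast hb)

lemma sep_aux (F : X → EReal) (hproper : ∃ x, F x ≠ ⊤) (hbot : ∀ x, F x ≠ ⊥)
    (hconv : ConvexE F) (hlsc : LowerSemicontinuous F)
    (x₀ : X) (r : ℝ) (hr : (r : EReal) < F x₀) :
    (∃ (φ : X →L[ℝ] ℝ) (c : ℝ), (∀ x, ((φ x - c : ℝ) : EReal) ≤ F x) ∧ r < φ x₀ - c) ∨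
    (∃ (f : X →L[ℝ] ℝ) (s : ℝ), (∀ x : X, ∀ t : ℝ, F x ≤ (t : EReal) → f x < s) ∧ s < f x₀) := by
  set E : Set (X × ℝ) := {p | F p.1 ≤ (p.2 : EReal)} with hE
  have hEconv : Convex ℝ E := by
    intro p hp q hq a b ha hb hab
    simp only [hE, Set.mem_setOf_eq] at hp hq ⊢
    have h1 : (a • p + b • q).1 = a • p.1 + b • q.1 := rfl
    have h2 : (a • p + b • q).2 = a * p.2 + b * q.2 := rfl
    rw [h1, h2]
    calc F (a • p.1 + b • q.1) ≤ (a : EReal) * F p.1 + (b : EReal) * F q.1 :=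
          hconv _ _ a b ha hb hab
      _ ≤ (a : EReal) * (p.2 : EReal) + (b : EReal) * (q.2 : EReal) :=
          add_le_add (mul_le_mul_of_nonneg_left hp (by exact_mod_cast ha))
            (mul_le_mul_of_nonneg_left hq (by exact_mod_cast hb))
      _ = ((a * p.2 + b * q.2 : ℝ) : EReal) := by
          rw [← EReal.coe_mul, ← EReal.coe_mul, ← EReal.coe_add]
  have hEclosed : IsClosed E := by
    rw [← isOpen_compl_iff, isOpen_iff_mem_nhds]
    rintro ⟨x, t⟩ hp
    simp only [hE, Set.mem_compl_iff, Set.mem_setOf_eq, not_le] at hp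
    obtain ⟨c, hc1, hc2⟩ := EReal.exists_between_coe_real hp
    have h1 : ∀ᶠ z in 𝓝 x, (c : EReal) < F z := hlsc x (c : EReal) hc2
    have h2 : ∀ᶠ u in 𝓝 t, u < c := gt_mem_nhds (by exact_mod_cast hc1)
    rw [nhds_prod_eq]
    filter_upwards [h1.prod_inl (𝓝 t), h2.prod_inr (𝓝 x)] with q hq1 hq2
    simp only [hE, Set.mem_compl_iff, Set.mem_setOf_eq, not_le]
    exact lt_trans (by exact_mod_cast hq2) hq1
  have hx₀ : ((x₀, r) : X × ℝ) ∉ E := by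
    simp only [hE, Set.mem_setOf_eq, not_le]; exact hr
  obtain ⟨g, s, hgE, hgx⟩ := geometric_hahn_banach_closed_point hEconv hEclosed hx₀
  set f : X →L[ℝ] ℝ := g.comp (ContinuousLinearMap.inl ℝ X ℝ) with hf
  set α : ℝ := g (0, 1) with hα
  have hg : ∀ (x : X) (t : ℝ), g (x, t) = f x + t * α := by
    intro x t
    have hxt : ((x, t) : X × ℝ) = (x, (0 : ℝ)) + t • ((0 : X), (1 : ℝ)) := by
      simp [Prod.ext_iff]
    rw [hxt, map_add, map_smul]
    simp [hf, hα, smul_eq_mul]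
  have hmem : ∀ (x : X) (t : ℝ), F x ≤ (t : EReal) → f x + t * α < s := by
    intro x t h
    have hmem' : ((x, t) : X × ℝ) ∈ E := h
    have := hgE _ hmem'
    rwa [hg] at this
  have hx₀' : s < f x₀ + r * α := by rw [← hg]; exact hgx
  have hαle : α ≤ 0 := by
    by_contra hpos
    push_neg at hpos
    obtain ⟨x₁, hx₁⟩ := hproper
    cases ht₁ : F x₁ using EReal.rec with
    | bot => exact absurd ht₁ (hbot x₁)
    | top => exact absurd ht₁ hx₁
    | coe t₁ =>
      obtain ⟨n, hn⟩ := exists_nat_gt ((s - f x₁ - t₁ * α) / α)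
      have h1 : F x₁ ≤ ((t₁ + n : ℝ) : EReal) := by
        rw [ht₁]
        exact EReal.coe_le_coe_iff.2 (le_add_of_nonneg_right n.cast_nonneg)
      have h2 := hmem x₁ (t₁ + n) h1
      rw [div_lt_iff₀ hpos] at hn
      have h3 : f x₁ + (t₁ + n) * α = f x₁ + t₁ * α + n * α := by ring
      linarith
  rcases lt_or_eq_of_le hαle with hneg | hzero
  · -- α < 0 : we obtain an affine minorant passing above the point
    left
    set β : ℝ := -α with hβ
    have hβpos : 0 < β := by simp [hβ]; linarith
    refine ⟨β⁻¹ • f, s / β, ?_, ?_⟩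
    · intro x
      cases hx : F x using EReal.rec with
      | bot => exact absurd hx (hbot x)
      | top => exact le_top
      | coe t =>
        have h2 := hmem x t (le_of_eq hx)
        rw [EReal.coe_le_coe_iff]
        have hφ : (β⁻¹ • f) x = β⁻¹ * f x := by
          simp [ContinuousLinearMap.smul_apply, smul_eq_mul]
        rw [hφ]
        have hα' : α = -β := by simp [hβ]
        rw [hα'] at h2
        have hlt : f x - s < t * β := by linarith
        have h3 : (f x - s) / β < t := (div_lt_iff₀ hβpos).2 (by linarith)
        have h4 : β⁻¹ * f x - s / β = (f x - s) / β := by field_simp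
        linarith [h4, h3]
    · have hφ : (β⁻¹ • f) x₀ = β⁻¹ * f x₀ := by
        simp [ContinuousLinearMap.smul_apply, smul_eq_mul]
      rw [hφ]
      have hα' : α = -β := by simp [hβ]
      rw [hα'] at hx₀'
      have hlt : r * β < f x₀ - s := by linarith
      have h3 : r < (f x₀ - s) / β := (lt_div_iff₀ hβpos).2 (by linarith)
      have h4 : β⁻¹ * f x₀ - s / β = (f x₀ - s) / β := by field_simp
      linarith [h4, h3]
  · -- α = 0
    right
    refine ⟨f, s, ?_, ?_⟩
    · intro x t h
      have := hmem x t h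
      rw [hzero, mul_zero, add_zero] at this
      exact this
    · rw [hzero, mul_zero, add_zero] at hx₀'
      exact hx₀'

lemma lt_biconj (F : X → EReal) (hproper : ∃ x, F x ≠ ⊤) (hbot : ∀ x, F x ≠ ⊥)
    (hconv : ConvexE F) (hlsc : LowerSemicontinuous F)
    (x₀ : X) (r : ℝ) (hr : (r : EReal) < F x₀) : (r : EReal) < EBiconj F x₀ := by
  rcases sep_aux F hproper hbot hconv hlsc x₀ r hr with ⟨φ, c, hmin, hpt⟩ | ⟨f, s, hlt, hpt⟩
  · exact lt_of_lt_of_le (EReal.coe_lt_coe_iff.2 hpt) (minorant_le_biconj F φ c hmin x₀)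
  · obtain ⟨x₁, hx₁⟩ := hproper
    cases ht₁ : F x₁ using EReal.rec with
    | bot => exact absurd ht₁ (hbot x₁)
    | top => exact absurd ht₁ hx₁
    | coe t₁ =>
      have h1 : ((t₁ - 1 : ℝ) : EReal) < F x₁ := by
        rw [ht₁]; exact EReal.coe_lt_coe_iff.2 (by linarith)
      rcases sep_aux F ⟨x₁, hx₁⟩ hbot hconv hlsc x₁ (t₁ - 1) h1 with
        ⟨φ₀, c₀, hmin₀, -⟩ | ⟨f₀, s₀, hlt₀, hpt₀⟩
      · have hfs : 0 < f x₀ - s := by linarith [hpt]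
        set n : ℝ := max 0 ((r - (φ₀ x₀ - c₀)) / (f x₀ - s)) + 1 with hn
        have hn0 : 0 ≤ n := by
          have := le_max_left 0 ((r - (φ₀ x₀ - c₀)) / (f x₀ - s)); simp [hn]; linarith
        have hngt : r - (φ₀ x₀ - c₀) < n * (f x₀ - s) := by
          have h2 : (r - (φ₀ x₀ - c₀)) / (f x₀ - s) < n := by
            have := le_max_right 0 ((r - (φ₀ x₀ - c₀)) / (f x₀ - s)); simp [hn]; linarith
          calc r - (φ₀ x₀ - c₀)
              = ((r - (φ₀ x₀ - c₀)) / (f x₀ - s)) * (f x₀ - s) := by field_simp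
            _ < n * (f x₀ - s) := mul_lt_mul_of_pos_right h2 hfs
        set ψ : X →L[ℝ] ℝ := φ₀ + n • f with hψ
        set d : ℝ := c₀ + n * s with hd
        have hψx : ∀ z : X, ψ z = φ₀ z + n * f z := by
          intro z
          simp [hψ, ContinuousLinearMap.add_apply, ContinuousLinearMap.smul_apply, smul_eq_mul]
        have hminψ : ∀ x, ((ψ x - d : ℝ) : EReal) ≤ F x := by
          intro x
          cases hx : F x using EReal.rec with
          | bot => exact absurd hx (hbot x)
          | top => exact le_top
          | coe t =>
            have hm := hmin₀ x
            rw [hx, EReal.coe_le_coe_iff] at hm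
            have hl := hlt x t (le_of_eq hx)
            have hns : n * (f x - s) ≤ 0 :=
              mul_nonpos_iff.2 (Or.inl ⟨hn0, by linarith⟩)
            rw [EReal.coe_le_coe_iff, hψx x, hd]
            nlinarith
        have hp : r < ψ x₀ - d := by
          rw [hψx x₀, hd]; nlinarith
        exact lt_of_lt_of_le (EReal.coe_lt_coe_iff.2 hp) (minorant_le_biconj F ψ d hminψ x₀)
      · have := hlt₀ x₁ t₁ (le_of_eq ht₁)
        linarith

end FenchelMoreauAux

/-- Fenchel–Moreau theorem: for proper `F`, `F** ≤ F` pointwise, and `F** = F` if and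
only if `F` is convex and lower semicontinuous. -/
theorem fenchel_moreau {X : Type*} [NormedAddCommGroup X] [NormedSpace ℝ X]
    (F : X → EReal) (hproper : ∃ x, F x ≠ ⊤) (hbot : ∀ x, F x ≠ ⊥) :
    (∀ x : X, EBiconj F x ≤ F x) ∧
    ((∀ x : X, EBiconj F x = F x) ↔ (ConvexE F ∧ LowerSemicontinuous F)) := by
  refine ⟨biconj_le_aux F hbot, ?_, ?_⟩
  · intro heq
    have hfe : EBiconj F = F := funext heq
    exact ⟨hfe ▸ biconj_convex F, hfe ▸ biconj_lsc F⟩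
  · rintro ⟨hconv, hlsc⟩ x
    refine le_antisymm (biconj_le_aux F hbot x) ?_
    by_contra hlt
    push_neg at hlt
    obtain ⟨r, hr1, hr2⟩ := EReal.exists_between_coe_real hlt
    exact absurd (lt_biconj F hproper hbot hconv hlsc x r hr2) (not_lt.2 (le_of_lt hr1))
end

section
/- Let X be a Hilbert space and A: X ⇉ X be a monotone set-valued operator. Then A is maximally monotone if and only if Id + A is surjective, i.e., ran(Id + A) = X (Minty's theorem). -/
/-- A set-valued operator on a Hilbert space is monotone. -/
def MonotoneOp {X : Type*} [NormedAddCommGroup X] [InnerProductSpace ℝ X]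
    (A : X → Set X) : Prop :=
  (∃ x y, y ∈ A x) ∧
    ∀ x₁ x₂ y₁ y₂ : X, y₁ ∈ A x₁ → y₂ ∈ A x₂ → (0:ℝ) ≤ inner ℝ (y₁ - y₂) (x₁ - x₂)

/-- A set-valued operator on a Hilbert space is maximally monotone. -/
def MaximallyMonotoneOp {X : Type*} [NormedAddCommGroup X] [InnerProductSpace ℝ X]
    (A : X → Set X) : Prop :=
  MonotoneOp A ∧
    ∀ x y : X, (∀ x' y' : X, y' ∈ A x' → (0:ℝ) ≤ inner ℝ (y - y') (x - x')) → y ∈ A x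

/-!
Only surjectivity of `Id + A` needs work, and after replacing `A` by `x ↦ A x - z` it amounts
to finding `x` with `-x ∈ A x`. The Fitzpatrick function
`F(x, y) = sup {⟪x, b⟫ + ⟪a, y⟫ - ⟪a, b⟫ | b ∈ A a}` is convex and lower semicontinuous,
equals `⟪a, b⟫` on the graph of `A` and, by maximality, dominates `⟪x, y⟫` everywhere. Hence
`F(x, y) + ‖x‖² / 2 + ‖y‖² / 2 ≥ ‖x + y‖² / 2 ≥ 0`, and this strongly convex function attains
its minimum at some `(x, y)` because `X` is complete. Testing the first-order condition at
`(x, y)` against graph points `(a, b)` gives `‖x + y‖² ≤ ⟪x + b, y + a⟫`; by maximality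
`(-y, -x)` lies in the graph, and testing against it forces `x + y = 0`.
-/

open Filter Topology
open scoped RealInnerProductSpace

section Minimization

variable {E : Type*} [NormedAddCommGroup E] [InnerProductSpace ℝ E]

theorem norm_midpoint_sq (x y : E) :
    ‖midpoint ℝ x y‖ ^ 2 = (‖x‖ ^ 2 + ‖y‖ ^ 2) / 2 - ‖x - y‖ ^ 2 / 4 := by
  rw [midpoint_eq_smul_add, norm_smul, mul_pow, invOf_eq_inv, norm_inv, Real.norm_two]
  linarith [parallelogram_law_with_norm ℝ x y]

theorem exists_isMinOn_snd_add_norm_sq_div_two [CompleteSpace E] {K : Set (E × ℝ)}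
    (hne : K.Nonempty) (hK : Convex ℝ K) (hKc : IsClosed K)
    (hbdd : BddBelow ((fun p : E × ℝ => p.2 + ‖p.1‖ ^ 2 / 2) '' K)) :
    ∃ p ∈ K, IsMinOn (fun p : E × ℝ => p.2 + ‖p.1‖ ^ 2 / 2) K p := by
  set φ : E × ℝ → ℝ := fun p => p.2 + ‖p.1‖ ^ 2 / 2
  set m := sInf (φ '' K)
  have hm : ∀ q ∈ K, m ≤ φ q := fun q hq => csInf_le hbdd (Set.mem_image_of_mem φ hq)
  obtain ⟨v, hv_anti, hv_lim, hv_mem⟩ :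
      ∃ v : ℕ → ℝ, Antitone v ∧ Tendsto v atTop (𝓝 m) ∧ ∀ n, v n ∈ φ '' K :=
    exists_seq_tendsto_sInf (hne.image φ) hbdd
  choose p hpK hpv using hv_mem
  have hdist : ∀ n k, ‖(p n).1 - (p k).1‖ ^ 2 ≤ 4 * (v n - m + (v k - m)) := by
    intro n k
    have hmid := hm _ (hK.midpoint_mem (hpK n) (hpK k))
    have hfst : (midpoint ℝ (p n) (p k)).1 = midpoint ℝ (p n).1 (p k).1 := rfl
    have hsnd : (midpoint ℝ (p n) (p k)).2 = midpoint ℝ (p n).2 (p k).2 := rfl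
    simp only [φ, hfst, hsnd, norm_midpoint_sq] at hmid hpv
    rw [midpoint_eq_smul_add, invOf_eq_inv, smul_eq_mul] at hmid
    linarith [hpv n, hpv k]
  have hcauchy : CauchySeq (fun n => (p n).1) := by
    refine cauchySeq_of_le_tendsto_0 (fun N => √(8 * (v N - m))) (fun n k N hn hk => ?_) ?_
    · rw [dist_eq_norm]
      apply Real.le_sqrt_of_sq_le
      linarith [hdist n k, hv_anti hn, hv_anti hk]
    · simpa using ((hv_lim.sub_const m).const_mul 8).sqrt
  obtain ⟨x, hx⟩ := cauchySeq_tendsto_of_complete hcauchy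
  have hc : Tendsto (fun n => (p n).2) atTop (𝓝 (m - ‖x‖ ^ 2 / 2)) := by
    refine (hv_lim.sub ((hx.norm.pow 2).div_const 2)).congr fun n => ?_
    rw [← hpv n]
    simp [φ]
  have hxK : (x, m - ‖x‖ ^ 2 / 2) ∈ K :=
    hKc.mem_of_tendsto (hx.prodMk_nhds hc) (Eventually.of_forall hpK)
  exact ⟨_, hxK, fun q hq => by simpa [φ] using hm q hq⟩

theorem IsMinOn.snd_le_snd_add_inner {K : Set (E × ℝ)} (hK : Convex ℝ K) {p q : E × ℝ}
    (hp : p ∈ K) (hq : q ∈ K) (hmin : IsMinOn (fun p : E × ℝ => p.2 + ‖p.1‖ ^ 2 / 2) K p) :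
    p.2 ≤ q.2 + ⟪p.1, q.1 - p.1⟫ := by
  have hderiv : HasFDerivAt (fun p : E × ℝ => p.2 + ‖p.1‖ ^ 2 / 2)
      (ContinuousLinearMap.snd ℝ E ℝ + (innerSL ℝ p.1).comp (ContinuousLinearMap.fst ℝ E ℝ)) p := by
    have h := hasFDerivAt_snd.add ((hasFDerivAt_fst (p := p) (𝕜 := ℝ)).norm_sq.const_mul (2⁻¹ : ℝ))
    refine (h.congr_fderiv ?_).congr_of_eventuallyEq (Eventually.of_forall fun q => ?_)
    · ext <;> simp
    · simp [div_eq_inv_mul]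
  have h := hmin.localize.hasFDerivWithinAt_nonneg hderiv.hasFDerivWithinAt
    (sub_mem_posTangentConeAt_of_segment_subset (hK.segment_subset hp hq))
  simp only [add_apply, ContinuousLinearMap.coe_snd', Prod.snd_sub,
    ContinuousLinearMap.comp_apply, ContinuousLinearMap.coe_fst', Prod.fst_sub,
    coe_innerSL_apply] at h
  linarith

end Minimization

section Fitzpatrick

variable {X : Type*} [NormedAddCommGroup X] [InnerProductSpace ℝ X]

/-- The epigraph of the Fitzpatrick function `F(x, y) = sup {⟪x, b⟫ + ⟪a, y⟫ - ⟪a, b⟫ | b ∈ A a}`,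
over the `L²` product so that `‖(x, y)‖² = ‖x‖² + ‖y‖²`. -/
def fitzpatrickEpigraph (A : X → Set X) : Set (WithLp 2 (X × X) × ℝ) :=
  {p | ∀ a b, b ∈ A a → ⟪p.1.fst, b⟫ + ⟪a, p.1.snd⟫ - ⟪a, b⟫ ≤ p.2}

theorem convex_fitzpatrickEpigraph (A : X → Set X) : Convex ℝ (fitzpatrickEpigraph A) := by
  intro p hp q hq s t hs ht hst a b hab
  have hp' := mul_le_mul_of_nonneg_left (hp a b hab) hs
  have hq' := mul_le_mul_of_nonneg_left (hq a b hab) ht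
  simp only [Prod.fst_add, Prod.snd_add, Prod.smul_fst, Prod.smul_snd, WithLp.add_fst,
    WithLp.add_snd, WithLp.smul_fst, WithLp.smul_snd, inner_add_left, inner_add_right,
    real_inner_smul_left, real_inner_smul_right, smul_eq_mul]
  linear_combination hp' + hq' + ⟪a, b⟫ * hst

theorem isClosed_fitzpatrickEpigraph (A : X → Set X) : IsClosed (fitzpatrickEpigraph A) := by
  have : fitzpatrickEpigraph A = ⋂ a, ⋂ b, ⋂ _ : b ∈ A a,
      {p : WithLp 2 (X × X) × ℝ | ⟪p.1.fst, b⟫ + ⟪a, p.1.snd⟫ - ⟪a, b⟫ ≤ p.2} := by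
    ext; simp [fitzpatrickEpigraph]
  rw [this]
  exact isClosed_iInter fun a => isClosed_iInter fun b => isClosed_iInter fun _ =>
    isClosed_le (by fun_prop) (by fun_prop)

theorem MonotoneOp.mem_fitzpatrickEpigraph {A : X → Set X} (hA : MonotoneOp A) {a b : X}
    (hab : b ∈ A a) : (WithLp.toLp 2 (a, b), ⟪a, b⟫) ∈ fitzpatrickEpigraph A := by
  intro a' b' hab'
  have := hA.2 a a' b b' hab hab'
  simp only [inner_sub_left, inner_sub_right] at this
  simp only [WithLp.toLp_fst, WithLp.toLp_snd]
  linarith [real_inner_comm a b, real_inner_comm a b', real_inner_comm a' b, real_inner_comm a' b']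

theorem MaximallyMonotoneOp.inner_le_of_mem_fitzpatrickEpigraph {A : X → Set X}
    (hA : MaximallyMonotoneOp A) {p : WithLp 2 (X × X) × ℝ} (hp : p ∈ fitzpatrickEpigraph A) :
    ⟪p.1.fst, p.1.snd⟫ ≤ p.2 := by
  by_contra! hlt
  have hmem : p.1.snd ∈ A p.1.fst := hA.2 _ _ fun a b hab => by
    have := hp a b hab
    simp only [inner_sub_left, inner_sub_right]
    linarith [real_inner_comm p.1.fst b, real_inner_comm p.1.snd p.1.fst,
      real_inner_comm p.1.snd a, real_inner_comm b a]
  linarith [hp _ _ hmem]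

theorem MaximallyMonotoneOp.snd_add_norm_sq_div_two_nonneg {A : X → Set X}
    (hA : MaximallyMonotoneOp A) {p : WithLp 2 (X × X) × ℝ} (hp : p ∈ fitzpatrickEpigraph A) :
    0 ≤ p.2 + ‖p.1‖ ^ 2 / 2 := by
  rw [WithLp.prod_norm_sq_eq_of_L2]
  nlinarith [hA.inner_le_of_mem_fitzpatrickEpigraph hp, norm_add_sq_real p.1.fst p.1.snd,
    sq_nonneg ‖p.1.fst + p.1.snd‖]

theorem MaximallyMonotoneOp.exists_neg_mem [CompleteSpace X] {A : X → Set X}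
    (hA : MaximallyMonotoneOp A) : ∃ x, -x ∈ A x := by
  obtain ⟨a₀, b₀, hab₀⟩ := hA.1.1
  obtain ⟨p, hpK, hmin⟩ := exists_isMinOn_snd_add_norm_sq_div_two
    ⟨_, hA.1.mem_fitzpatrickEpigraph hab₀⟩ (convex_fitzpatrickEpigraph A)
    (isClosed_fitzpatrickEpigraph A)
    ⟨0, by rintro _ ⟨q, hq, rfl⟩; exact hA.snd_add_norm_sq_div_two_nonneg hq⟩
  set x := p.1.fst
  set y := p.1.snd
  have hkey : ∀ a b, b ∈ A a → ‖x + y‖ ^ 2 ≤ ⟪x + b, y + a⟫ := fun a b hab => by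
    have hvar := hmin.snd_le_snd_add_inner (convex_fitzpatrickEpigraph A) hpK
      (hA.1.mem_fitzpatrickEpigraph hab)
    simp only [WithLp.prod_inner_apply, WithLp.ofLp_fst, WithLp.ofLp_snd, inner_sub_right,
      real_inner_self_eq_norm_sq] at hvar
    rw [norm_add_sq_real, inner_add_left, inner_add_right, inner_add_right,
      real_inner_comm y b, real_inner_comm a b]
    linarith [hA.inner_le_of_mem_fitzpatrickEpigraph hpK]
  have hmem : -x ∈ A (-y) := hA.2 _ _ fun a b hab => by
    have h := hkey a b hab
    rw [← neg_add', ← neg_add', inner_neg_neg]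
    linarith [sq_nonneg ‖x + y‖]
  have hsum : x + y = 0 := by
    have h := hkey _ _ hmem
    rw [← sub_eq_add_neg, ← sub_eq_add_neg, sub_self, inner_zero_left] at h
    simpa using h
  exact ⟨x, by rwa [neg_eq_of_add_eq_zero_left hsum] at hmem⟩

end Fitzpatrick

section Operators

variable {X : Type*} [NormedAddCommGroup X] [InnerProductSpace ℝ X] {A : X → Set X}

theorem MaximallyMonotoneOp.sub_const (hA : MaximallyMonotoneOp A) (z : X) :
    MaximallyMonotoneOp fun x => {y | y + z ∈ A x} := by
  obtain ⟨⟨⟨a, b, hab⟩, hmono⟩, hmax⟩ := hA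
  refine ⟨⟨⟨a, b - z, by simpa using hab⟩, fun x₁ x₂ y₁ y₂ h₁ h₂ => ?_⟩, fun x y hxy => ?_⟩
  · simpa using hmono x₁ x₂ _ _ h₁ h₂
  · refine hmax x (y + z) fun x' y' hy' => ?_
    simpa [sub_sub_eq_add_sub] using hxy x' (y' - z) (by simpa using hy')

theorem MonotoneOp.maximallyMonotoneOp_of_forall_exists_add_eq (hA : MonotoneOp A)
    (hsurj : ∀ z, ∃ x y, y ∈ A x ∧ x + y = z) : MaximallyMonotoneOp A := by
  refine ⟨hA, fun x y hxy => ?_⟩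
  obtain ⟨u, w, hw, huw⟩ := hsurj (x + y)
  have h := hxy u w hw
  rw [show y - w = -(x - u) by rw [neg_sub, sub_eq_sub_iff_add_eq_add, huw, add_comm],
    inner_neg_left, real_inner_self_eq_norm_sq, neg_nonneg] at h
  obtain rfl : x = u := by simpa [sub_eq_zero] using h
  rwa [← add_left_cancel huw]

end Operators

/-- Minty's theorem: a monotone operator `A` on a Hilbert space is maximally monotone
if and only if `Id + A` is surjective. -/
theorem minty {X : Type*} [NormedAddCommGroup X] [InnerProductSpace ℝ X]
    [CompleteSpace X] (A : X → Set X) (hmono : MonotoneOp A) :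
    MaximallyMonotoneOp A ↔ ∀ z : X, ∃ x y : X, y ∈ A x ∧ x + y = z := by
  refine ⟨fun hA z => ?_, hmono.maximallyMonotoneOp_of_forall_exists_add_eq⟩
  obtain ⟨x, hx⟩ := (hA.sub_const z).exists_neg_mem
  exact ⟨x, z - x, by simpa [neg_add_eq_sub] using hx, add_sub_cancel x z⟩
end

section
/- Let X be a Hilbert space and F: X → ℝ ∪ {∞} be proper, convex, and lower semicontinuous. Then for every x ∈ X, the Moreau decomposition holds: x = prox_F(x) + prox_{F*}(x). -/
/-- The Fenchel conjugate, with `X*` identified with `X` via the Riesz isomorphism. -/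
noncomputable def HConj {X : Type*} [NormedAddCommGroup X] [InnerProductSpace ℝ X]
    (F : X → EReal) (w : X) : EReal :=
  ⨆ z : X, (((inner ℝ w z : ℝ)) : EReal) - F z

/-!
Write `P z = ½‖z - x‖² + F z`. It is bounded below, because `F` has a continuous affine minorant
(Hahn–Banach applied to the closed convex epigraph), and it is 1-strongly convex, so by the
parallelogram law its near-minimizers cluster and, `X` being complete and `P` lower
semicontinuous, a minimizer `p` exists. Comparing `p` with the points of the segment `[p, z]`
shows that `x - p` is a subgradient of `F` at `p`; the equality case of Fenchel–Young then makes
`p` a subgradient of `F*` at `q := x - p`. Finally, if `x - a` is a subgradient of `f` at `a`, then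
`½‖z - x‖² + f z ≥ ½‖a - x‖² + f a + ½‖z - a‖²`, so `a` is the unique prox point of `f` at `x`.
Applied to `F` at `p` and to `F*` at `q`, this gives `x = p + q`.
-/

open Filter Topology
open scoped RealInnerProductSpace

namespace ConvexE

variable {X : Type*} [AddCommMonoid X] [Module ℝ X] {F : X → EReal}

theorem apply_add_le (hF : ConvexE F) {u v : X} {s t : ℝ} (hu : F u ≤ s) (hv : F v ≤ t)
    {a b : ℝ} (ha : 0 ≤ a) (hb : 0 ≤ b) (hab : a + b = 1) :
    F (a • u + b • v) ≤ ((a * s + b * t : ℝ) : EReal) :=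
  calc F (a • u + b • v) ≤ (a : EReal) * F u + (b : EReal) * F v := hF u v a b ha hb hab
    _ ≤ (a : EReal) * s + (b : EReal) * t :=
      add_le_add (mul_le_mul_of_nonneg_left hu (EReal.coe_nonneg.2 ha))
        (mul_le_mul_of_nonneg_left hv (EReal.coe_nonneg.2 hb))
    _ = ((a * s + b * t : ℝ) : EReal) := by norm_cast

theorem convex_epigraph (hF : ConvexE F) : Convex ℝ {p : X × ℝ | F p.1 ≤ p.2} := by
  rintro ⟨u, s⟩ hu ⟨v, t⟩ hv a b ha hb hab
  exact hF.apply_add_le hu hv ha hb hab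

end ConvexE

theorem LowerSemicontinuous.isClosed_real_epigraph {X : Type*} [TopologicalSpace X]
    {F : X → EReal} (hF : LowerSemicontinuous F) : IsClosed {p : X × ℝ | F p.1 ≤ p.2} :=
  hF.isClosed_epigraph.preimage <|
    continuous_fst.prodMk (continuous_coe_real_ereal.comp continuous_snd)

theorem ConvexE.exists_affine_le {X : Type*} [NormedAddCommGroup X] [NormedSpace ℝ X]
    {F : X → EReal} (hconv : ConvexE F) (hlsc : LowerSemicontinuous F) {x₀ : X} {r₀ : ℝ}
    (h₀ : F x₀ = r₀) : ∃ (φ : X →L[ℝ] ℝ) (c : ℝ), ∀ z, ((c + φ z : ℝ) : EReal) ≤ F z := by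
  obtain ⟨f, u, hfu, hf⟩ := geometric_hahn_banach_point_closed hconv.convex_epigraph
    hlsc.isClosed_real_epigraph (x := (x₀, r₀ - 1))
    (by simpa [h₀] using EReal.coe_lt_coe_iff.2 (sub_one_lt r₀))
  have hsplit : ∀ z t, f (z, t) = f (z, 0) + t * f (0, 1) := fun z t => by
    rw [← smul_eq_mul, ← map_smul, ← map_add]; simp
  set α := f (0, 1)
  -- `(x₀, r₀)` lies in the epigraph right above the separated point: the hyperplane is not vertical
  have hα : 0 < α := by
    have hmem := hf (x₀, r₀) (by simp [h₀])
    rw [hsplit] at hmem hfu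
    linarith
  refine ⟨-α⁻¹ • f.comp (.inl ℝ X ℝ), u / α,
    fun z => EReal.le_of_forall_lt_iff_le.1 fun t ht => ?_⟩
  have hzt := hf (z, t) ht.le
  rw [hsplit] at hzt
  change ((u / α + -α⁻¹ * f (z, 0) : ℝ) : EReal) ≤ t
  rw [EReal.coe_le_coe_iff, div_add' _ _ _ hα.ne', div_le_iff₀ hα]
  field_simp
  linarith

theorem LowerSemicontinuous.exists_le_of_wellPosed {X : Type*} [PseudoMetricSpace X]
    [CompleteSpace X] {G : X → EReal} (hG : LowerSemicontinuous G) {m : ℝ}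
    (happrox : ∀ ε > 0, ∃ z, G z ≤ ((m + ε : ℝ) : EReal))
    (hwell : ∀ δ > 0, ∃ ε > 0, ∀ u v, G u ≤ ((m + ε : ℝ) : EReal) →
      G v ≤ ((m + ε : ℝ) : EReal) → dist u v ≤ δ) :
    ∃ p, G p ≤ m := by
  choose u hu using fun n : ℕ => happrox (1 / (n + 1)) Nat.one_div_pos_of_nat
  have hmono : ∀ {N n : ℕ}, N ≤ n → G (u n) ≤ ((m + 1 / (N + 1) : ℝ) : EReal) := fun h =>
    (hu _).trans (EReal.coe_le_coe_iff.2 (by gcongr))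
  have hcauchy : CauchySeq u := by
    refine Metric.cauchySeq_iff'.2 fun δ hδ => ?_
    obtain ⟨ε, hε, hdist⟩ := hwell (δ / 2) (half_pos hδ)
    obtain ⟨N, hN⟩ := exists_nat_one_div_lt hε
    have hN' : G (u N) ≤ ((m + ε : ℝ) : EReal) := hmono le_rfl |>.trans (by gcongr)
    exact ⟨N, fun n hn => (hdist _ _ ((hmono hn).trans (by gcongr)) hN').trans_lt (half_lt_self hδ)⟩
  obtain ⟨p, hp⟩ := cauchySeq_tendsto_of_complete hcauchy
  refine ⟨p, not_lt.1 fun hlt => ?_⟩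
  obtain ⟨y, hmy, hyG⟩ := EReal.lt_iff_exists_real_btwn.1 hlt
  obtain ⟨N, hN⟩ := exists_nat_one_div_lt (sub_pos.2 (EReal.coe_lt_coe_iff.1 hmy))
  obtain ⟨n, hn, hyn⟩ := ((eventually_ge_atTop N).and (hp.eventually (hG p y hyG))).exists
  exact (hmono hn).not_gt (hyn.trans' (EReal.coe_lt_coe_iff.2 (by linarith)))

section Prox

variable {X : Type*} [NormedAddCommGroup X]

noncomputable def proxObjective (f : X → EReal) (x z : X) : EReal :=
  (((1/2 : ℝ) * ‖z - x‖ ^ 2 : ℝ) : EReal) + f z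

def IsProxPoint (f : X → EReal) (x p : X) : Prop :=
  ∀ z, proxObjective f x p ≤ proxObjective f x z

variable {f : X → EReal} {x z a : X} {c : ℝ}

theorem proxObjective_le_coe_iff {b : ℝ} :
    proxObjective f x z ≤ b ↔ f z ≤ ((b - 1/2 * ‖z - x‖ ^ 2 : ℝ) : EReal) := by
  unfold proxObjective
  induction f z using EReal.rec with
  | bot => simp only [EReal.add_bot, bot_le]
  | coe r =>
    rw [← EReal.coe_add, EReal.coe_le_coe_iff, EReal.coe_le_coe_iff]
    constructor <;> intro <;> linarith
  | top => simp only [EReal.coe_add_top, top_le_iff, EReal.coe_ne_top]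

theorem coe_le_proxObjective_iff {b : ℝ} :
    (b : EReal) ≤ proxObjective f x z ↔ ((b - 1/2 * ‖z - x‖ ^ 2 : ℝ) : EReal) ≤ f z := by
  unfold proxObjective
  induction f z using EReal.rec with
  | bot => simp only [EReal.add_bot, le_bot_iff, EReal.coe_ne_bot]
  | coe r =>
    rw [← EReal.coe_add, EReal.coe_le_coe_iff, EReal.coe_le_coe_iff]
    constructor <;> intro <;> linarith
  | top => simp only [EReal.coe_add_top, le_top]

theorem LowerSemicontinuous.proxObjective (hf : LowerSemicontinuous f) (x : X) :
    LowerSemicontinuous (proxObjective f x) :=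
  (continuous_coe_real_ereal.comp (by fun_prop)).lowerSemicontinuous.add' hf
    fun _ => EReal.continuousAt_add (.inl (EReal.coe_ne_top _)) (.inl (EReal.coe_ne_bot _))

theorem IsProxPoint.ne_top (hp : IsProxPoint f x a) (hz : f z ≠ ⊤) : f a ≠ ⊤ := by
  intro ha
  have hlt := (hp z).trans_lt (EReal.add_lt_top (EReal.coe_ne_top _) hz)
  rw [proxObjective, ha, EReal.coe_add_top] at hlt
  exact lt_irrefl _ hlt

theorem proxObjective_eq_coe (ha : f a = c) :
    proxObjective f x a = ((1/2 * ‖a - x‖ ^ 2 + c : ℝ) : EReal) := by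
  rw [proxObjective, ha, EReal.coe_add]

end Prox

section Hilbert

variable {X : Type*} [NormedAddCommGroup X] [InnerProductSpace ℝ X]

def HasSubgradientAt (f : X → EReal) (g a : X) : Prop :=
  ∀ z, f a + ((⟪g, z - a⟫ : ℝ) : EReal) ≤ f z

variable {f F : X → EReal} {x a g : X} {c : ℝ}

theorem ConvexE.sq_norm_sub_le_of_proxObjective_le (hconv : ConvexE F) {m ε : ℝ}
    (hm : ∀ z, (m : EReal) ≤ proxObjective F x z) {u v : X}
    (hu : proxObjective F x u ≤ ((m + ε : ℝ) : EReal))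
    (hv : proxObjective F x v ≤ ((m + ε : ℝ) : EReal)) :
    ‖u - v‖ ^ 2 ≤ 8 * ε := by
  rw [proxObjective_le_coe_iff] at hu hv
  have hmid := (coe_le_proxObjective_iff.1 (hm ((1/2 : ℝ) • u + (1/2 : ℝ) • v))).trans
    (hconv.apply_add_le hu hv (by norm_num) (by norm_num) (by norm_num))
  rw [EReal.coe_le_coe_iff] at hmid
  have hpar := parallelogram_law_with_norm ℝ (u - x) (v - x)
  have hw : (1/2 : ℝ) • u + (1/2 : ℝ) • v - x = (1/2 : ℝ) • ((u - x) + (v - x)) := by module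
  rw [hw, norm_smul, Real.norm_of_nonneg one_half_pos.le, mul_pow] at hmid
  rw [sub_sub_sub_cancel_right] at hpar
  linarith

theorem ConvexE.exists_isProxPoint [CompleteSpace X] (hconv : ConvexE F)
    (hlsc : LowerSemicontinuous F) {x₀ : X} {r₀ : ℝ} (h₀ : F x₀ = r₀) (x : X) :
    ∃ p, IsProxPoint F x p := by
  obtain ⟨φ, c, hφ⟩ := hconv.exists_affine_le hlsc h₀
  have hlow : ∀ z, ((c + φ x - ‖φ‖ ^ 2 / 2 : ℝ) : EReal) ≤ proxObjective F x z := fun z => by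
    refine coe_le_proxObjective_iff.2 ((EReal.coe_le_coe_iff.2 ?_).trans (hφ z))
    have hφz : -(‖φ‖ * ‖z - x‖) ≤ φ (z - x) := neg_le_of_abs_le (φ.le_opNorm _)
    rw [map_sub] at hφz
    nlinarith [sq_nonneg (‖z - x‖ - ‖φ‖)]
  set mE := ⨅ z, proxObjective F x z
  have hmE_ne_bot : mE ≠ ⊥ := ne_bot_of_le_ne_bot (EReal.coe_ne_bot _) (le_iInf hlow)
  have hmE_ne_top : mE ≠ ⊤ :=
    ne_top_of_le_ne_top (proxObjective_eq_coe h₀ ▸ EReal.coe_ne_top _) (iInf_le _ x₀)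
  set m := mE.toReal
  have hm : (m : EReal) = mE := EReal.coe_toReal hmE_ne_top hmE_ne_bot
  obtain ⟨p, hp⟩ := (hlsc.proxObjective x).exists_le_of_wellPosed (m := m)
    (fun ε hε => by
      obtain ⟨z, hz⟩ := iInf_lt_iff.1 (hm ▸ EReal.coe_lt_coe_iff.2 (lt_add_of_pos_right m hε))
      exact ⟨z, hz.le⟩)
    (fun δ hδ => ⟨δ ^ 2 / 8, by positivity, fun u v hu hv => by
      have hsq := hconv.sq_norm_sub_le_of_proxObjective_le (fun z => hm ▸ iInf_le _ z) hu hv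
      rw [dist_eq_norm]
      nlinarith [norm_nonneg (u - v)]⟩)
  exact ⟨p, fun z => hp.trans (hm ▸ iInf_le _ z)⟩

theorem IsProxPoint.hasSubgradientAt (hconv : ConvexE F) (hp : IsProxPoint F x a)
    (ha : F a = c) : HasSubgradientAt F (x - a) a := by
  intro z
  rw [ha, ← EReal.coe_add]
  refine EReal.le_of_forall_lt_iff_le.1 fun r hr => EReal.coe_le_coe_iff.2 ?_
  have hstep : ∀ t ∈ Set.Ioc (0 : ℝ) 1, c + ⟪x - a, z - a⟫ ≤ r + t / 2 * ‖z - a‖ ^ 2 := by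
    rintro t ⟨ht0, ht1⟩
    have hconvt := hconv.apply_add_le ha.le hr.le (sub_nonneg.2 ht1) ht0.le (sub_add_cancel 1 t)
    have hmin := coe_le_proxObjective_iff.1 (proxObjective_eq_coe ha ▸ hp ((1 - t) • a + t • z))
    have hnorm : ‖(1 - t) • a + t • z - x‖ ^ 2 =
        ‖a - x‖ ^ 2 + 2 * (t * ⟪a - x, z - a⟫) + t ^ 2 * ‖z - a‖ ^ 2 := by
      rw [show (1 - t) • a + t • z - x = (a - x) + t • (z - a) by module, norm_add_sq_real,
        real_inner_smul_right, norm_smul, mul_pow, Real.norm_eq_abs, sq_abs]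
    have hinner : ⟪x - a, z - a⟫ = -⟪a - x, z - a⟫ := by rw [← inner_neg_left, neg_sub]
    have hle := EReal.coe_le_coe_iff.1 (hmin.trans hconvt)
    rw [hnorm] at hle
    rw [hinner]
    refine le_of_mul_le_mul_left ?_ ht0
    nlinarith
  have hlim : Tendsto (fun t : ℝ => r + t / 2 * ‖z - a‖ ^ 2) (𝓝[>] 0) (𝓝 r) := by
    have hcont : Continuous fun t : ℝ => r + t / 2 * ‖z - a‖ ^ 2 := by fun_prop
    simpa using (hcont.tendsto 0).mono_left nhdsWithin_le_nhds
  exact ge_of_tendsto hlim (by filter_upwards [Ioc_mem_nhdsGT one_pos] with t ht using hstep t ht)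

theorem HasSubgradientAt.coe_le_proxObjective (h : HasSubgradientAt f (x - a) a) (ha : f a = c)
    (z : X) : ((1/2 * ‖a - x‖ ^ 2 + c + ‖z - a‖ ^ 2 / 2 : ℝ) : EReal) ≤ proxObjective f x z := by
  refine coe_le_proxObjective_iff.2 (le_trans ?_ (h z))
  rw [ha, ← EReal.coe_add, EReal.coe_le_coe_iff]
  have hnorm : ‖z - x‖ ^ 2 = ‖z - a‖ ^ 2 - 2 * ⟪z - a, x - a⟫ + ‖x - a‖ ^ 2 := by
    rw [← norm_sub_sq_real, sub_sub_sub_cancel_right]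
  rw [hnorm, norm_sub_rev a x, real_inner_comm]
  linarith

theorem HasSubgradientAt.isProxPoint (h : HasSubgradientAt f (x - a) a) (ha : f a = c) :
    IsProxPoint f x a := fun z => by
  refine (proxObjective_eq_coe ha).trans_le (le_trans ?_ (h.coe_le_proxObjective ha z))
  exact EReal.coe_le_coe_iff.2 (le_add_of_nonneg_right (by positivity))

theorem HasSubgradientAt.eq_of_isProxPoint (h : HasSubgradientAt f (x - a) a) (ha : f a = c)
    {a' : X} (ha' : IsProxPoint f x a') : a' = a := by
  have hle := EReal.coe_le_coe_iff.1 <|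
    (h.coe_le_proxObjective ha a').trans ((ha' a).trans (proxObjective_eq_coe ha).le)
  have hsq : ‖a' - a‖ ^ 2 = 0 := le_antisymm (by linarith) (by positivity)
  simpa [sub_eq_zero] using hsq

theorem HasSubgradientAt.hConj_eq (h : HasSubgradientAt F g a) (ha : F a = c) :
    HConj F g = ((⟪g, a⟫ - c : ℝ) : EReal) := by
  refine le_antisymm (iSup_le fun z => EReal.sub_le_of_le_add ?_) (le_iSup_of_le a ?_)
  · calc ((⟪g, z⟫ : ℝ) : EReal)
        = ((⟪g, a⟫ - c : ℝ) : EReal) + ((c + ⟪g, z - a⟫ : ℝ) : EReal) := by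
          rw [← EReal.coe_add, inner_sub_right]; ring_nf
      _ ≤ ((⟪g, a⟫ - c : ℝ) : EReal) + F z := by
          gcongr
          simpa only [ha, EReal.coe_add] using h z
  · rw [ha, EReal.coe_sub]

theorem HasSubgradientAt.hConj (h : HasSubgradientAt F g a) (ha : F a = c) :
    HasSubgradientAt (HConj F) a g := fun w => by
  rw [h.hConj_eq ha, ← EReal.coe_add]
  refine le_iSup_of_le a ?_
  rw [ha, ← EReal.coe_sub, EReal.coe_le_coe_iff, inner_sub_right, real_inner_comm a g,
    real_inner_comm a w]
  linarith

end Hilbert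

/-- Moreau decomposition: for proper, convex, lsc `F` on a Hilbert space and any `x`,
the proximal points `p = prox_F(x)` and `q = prox_{F*}(x)` exist, are unique, and
satisfy `x = p + q`. -/
theorem moreau_decomposition {X : Type*} [NormedAddCommGroup X]
    [InnerProductSpace ℝ X] [CompleteSpace X] (F : X → EReal)
    (hproper : ∃ x, F x ≠ ⊤) (hbot : ∀ x, F x ≠ ⊥)
    (hconv : ConvexE F) (hlsc : LowerSemicontinuous F) (x : X) :
    ∃ p q : X,
      (∀ z : X, (((1/2 : ℝ) * ‖p - x‖ ^ 2 : ℝ) : EReal) + F p ≤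
        (((1/2 : ℝ) * ‖z - x‖ ^ 2 : ℝ) : EReal) + F z) ∧
      (∀ p' : X, (∀ z : X, (((1/2 : ℝ) * ‖p' - x‖ ^ 2 : ℝ) : EReal) + F p' ≤
        (((1/2 : ℝ) * ‖z - x‖ ^ 2 : ℝ) : EReal) + F z) → p' = p) ∧
      (∀ z : X, (((1/2 : ℝ) * ‖q - x‖ ^ 2 : ℝ) : EReal) + HConj F q ≤
        (((1/2 : ℝ) * ‖z - x‖ ^ 2 : ℝ) : EReal) + HConj F z) ∧
      (∀ q' : X, (∀ z : X, (((1/2 : ℝ) * ‖q' - x‖ ^ 2 : ℝ) : EReal) + HConj F q' ≤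
        (((1/2 : ℝ) * ‖z - x‖ ^ 2 : ℝ) : EReal) + HConj F z) → q' = q) ∧
      x = p + q := by
  obtain ⟨x₀, hx₀⟩ := hproper
  obtain ⟨p, hp⟩ := hconv.exists_isProxPoint hlsc (EReal.coe_toReal hx₀ (hbot x₀)).symm x
  have hc : F p = (F p).toReal := (EReal.coe_toReal (hp.ne_top hx₀) (hbot p)).symm
  have hsub : HasSubgradientAt F (x - p) p := hp.hasSubgradientAt hconv hc
  have hsub' : HasSubgradientAt (HConj F) (x - (x - p)) (x - p) := by
    simpa only [sub_sub_cancel] using hsub.hConj hc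
  have hc' := hsub.hConj_eq hc
  exact ⟨p, x - p, hsub.isProxPoint hc, fun _ => hsub.eq_of_isProxPoint hc,
    hsub'.isProxPoint hc', fun _ => hsub'.eq_of_isProxPoint hc', (add_sub_cancel p x).symm⟩
end
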